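/- arXiv:2410.13417 — 2 statements merged into one kernel-verified Lean document; each statement's English description precedes it below -/
import Mathlib

section
/- Let 𝒫 be a set of prime numbers and let C = ℤ[𝒫⁻¹] be the subring of ℚ generated by {1/p : p ∈ 𝒫}, regarded as an additive abelian group. If B is an abelian group that is p-divisible for every p ∈ 𝒫, then every normalized 2-cocycle Ω : C × C → B is a coboundary, i.e., H²(C,B) = 0. -/
/-- The subring `ℤ[𝒫⁻¹]` of `ℚ` generated by the inverses of the primes in `𝒫`. -/
noncomputable def PRing (P : Set ℕ) : Subring ℚ :=
  Subring.closure {x : ℚ | ∃ p ∈ P, x = (p : ℚ)⁻¹}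

/-- A normalized 2-cocycle on an (additive) abelian group `A` with values in `B`. -/
def IsAddCocycle {A B : Type*} [AddCommGroup A] [AddCommGroup B] (Ω : A → A → B) : Prop :=
  (∀ a b c, Ω a b + Ω (a + b) c = Ω a (b + c) + Ω b c) ∧
  (∀ a, Ω a 0 = 0) ∧ (∀ a, Ω 0 a = 0)

/-- A 2-coboundary on an (additive) abelian group `A` with values in `B`. -/
def IsAddCoboundary {A B : Type*} [AddCommGroup A] [AddCommGroup B] (Ω : A → A → B) : Prop :=
  ∃ F : A → B, F 0 = 0 ∧ ∀ a b, Ω a b = F a + F b - F (a + b)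


/-!
A normalized cocycle `Ω` on `C` defines a central extension `E` of `C` by `B` (the set `B × C`
with `(b, a) + (b', a') = (b + b' + Ω a a', a + a')`), and `Ω` is a coboundary as soon as the
projection `E → C` has an additive section. Now `C` is the increasing union of the infinite cyclic
groups generated by `u K = 1 / n K`, where `n K` is the product of the `𝒫`-numbers up to `K`, and
`u K = d K • u (K + 1)` with `d K` a `𝒫`-number. Since `B` is `d K`-divisible, lifts `x K` of the
`u K` can be chosen inductively with `x K = d K • x (K + 1)`, and `j • u K ↦ j • x K` is then a
well-defined section.
-/

/-- The central extension of `A` by `B` classified by the cocycle `Ω`. -/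
@[ext]
structure CocycleExtension {A B : Type*} (Ω : A → A → B) where
  fst : B
  snd : A

namespace CocycleExtension

variable {A B : Type*} [AddCommGroup A] [AddCommGroup B] {Ω : A → A → B}

instance : Zero (CocycleExtension Ω) := ⟨⟨0, 0⟩⟩

instance : Add (CocycleExtension Ω) :=
  ⟨fun x y => ⟨x.fst + y.fst + Ω x.snd y.snd, x.snd + y.snd⟩⟩

instance : Neg (CocycleExtension Ω) := ⟨fun x => ⟨-x.fst - Ω (-x.snd) x.snd, -x.snd⟩⟩

@[simp] lemma fst_zero : (0 : CocycleExtension Ω).fst = 0 := rfl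
@[simp] lemma snd_zero : (0 : CocycleExtension Ω).snd = 0 := rfl
@[simp] lemma fst_add (x y : CocycleExtension Ω) :
    (x + y).fst = x.fst + y.fst + Ω x.snd y.snd := rfl
@[simp] lemma snd_add (x y : CocycleExtension Ω) : (x + y).snd = x.snd + y.snd := rfl
@[simp] lemma fst_neg (x : CocycleExtension Ω) : (-x).fst = -x.fst - Ω (-x.snd) x.snd := rfl
@[simp] lemma snd_neg (x : CocycleExtension Ω) : (-x).snd = -x.snd := rfl

variable [hΩ : Fact (IsAddCocycle Ω)]

instance : AddGroup (CocycleExtension Ω) :=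
  AddGroup.ofLeftAxioms
    (fun x y z => by
      have h := hΩ.out.1 x.snd y.snd z.snd
      ext
      · simp only [fst_add, snd_add]
        calc _ = x.fst + y.fst + z.fst + (Ω x.snd y.snd + Ω (x.snd + y.snd) z.snd) := by abel
          _ = _ := by rw [h]; abel
      · exact add_assoc _ _ _)
    (fun x => by ext <;> simp [hΩ.out.2.2])
    (fun x => by
      ext <;> simp only [fst_add, fst_neg, snd_add, snd_neg, fst_zero, snd_zero] <;> abel)

def sndHom : CocycleExtension Ω →+ A := AddMonoidHom.mk' snd fun _ _ => rfl

def inl : B →+ CocycleExtension Ω :=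
  AddMonoidHom.mk' (fun b => ⟨b, 0⟩) fun b b' => by ext <;> simp [hΩ.out.2.1]

@[simp] lemma sndHom_apply (x : CocycleExtension Ω) : sndHom x = x.snd := rfl
@[simp] lemma fst_inl (b : B) : (inl b : CocycleExtension Ω).fst = b := rfl
@[simp] lemma snd_inl (b : B) : (inl b : CocycleExtension Ω).snd = 0 := rfl

lemma inl_add_comm (b : B) (x : CocycleExtension Ω) : inl b + x = x + inl b := by
  ext
  · simp only [fst_add, fst_inl, snd_inl, hΩ.out.2.1, hΩ.out.2.2, add_comm b]
  · simp only [snd_add, snd_inl, zero_add, add_zero]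

lemma eq_inl_of_snd_eq_zero {x : CocycleExtension Ω} (h : x.snd = 0) : x = inl x.fst := by
  ext <;> simp [h]

theorem exists_nsmul_eq_of_snd_eq {n : ℕ} (hn : Function.Surjective fun b : B => n • b)
    (x : CocycleExtension Ω) {a : A} (ha : n • a = x.snd) :
    ∃ y : CocycleExtension Ω, y.snd = a ∧ n • y = x := by
  let y₀ : CocycleExtension Ω := ⟨0, a⟩
  have hker : (x - n • y₀).snd = 0 := by
    rw [← sndHom_apply, map_sub, map_nsmul, sndHom_apply, sndHom_apply, ← ha, sub_self]
  obtain ⟨c, hc : n • c = _⟩ := hn (x - n • y₀).fst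
  refine ⟨inl c + y₀, by simp [y₀], ?_⟩
  rw [AddCommute.add_nsmul (inl_add_comm c y₀), ← map_nsmul, hc, ← eq_inl_of_snd_eq_zero hker,
    sub_add_cancel]

theorem exists_compatible_lifts {u : ℕ → A} {d : ℕ → ℕ} (hu : ∀ K, u K = d K • u (K + 1))
    (hd : ∀ K, Function.Surjective fun b : B => d K • b) :
    ∃ x : ℕ → CocycleExtension Ω, (∀ K, (x K).snd = u K) ∧ ∀ K, x K = d K • x (K + 1) := by
  have step (K : ℕ) (y : {y : CocycleExtension Ω // y.snd = u K}) :
      ∃ y' : {y' : CocycleExtension Ω // y'.snd = u (K + 1)}, y.1 = d K • y'.1 := by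
    obtain ⟨y', hy'_snd, hy'⟩ := exists_nsmul_eq_of_snd_eq (hd K) y.1 (y.2.trans (hu K)).symm
    exact ⟨⟨y', hy'_snd⟩, hy'.symm⟩
  choose next hnext using step
  let x (K : ℕ) : {y : CocycleExtension Ω // y.snd = u K} :=
    Nat.rec (motive := fun K => {y : CocycleExtension Ω // y.snd = u K}) ⟨⟨0, u 0⟩, rfl⟩ next K
  exact ⟨fun K => (x K).1, fun K => (x K).2, fun K => hnext K (x K)⟩

theorem isAddCoboundary_of_section (s : A →+ CocycleExtension Ω) (hs : ∀ a, (s a).snd = a) :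
    IsAddCoboundary Ω := by
  refine ⟨fun a => -(s a).fst, by simp, fun a b => ?_⟩
  have h := congrArg fst (map_add s a b)
  rw [fst_add, hs, hs] at h
  change Ω a b = -(s a).fst + -(s b).fst - -(s (a + b)).fst
  rw [h]
  abel

end CocycleExtension

section Tower

variable {E A : Type*} [AddGroup E] [AddCommGroup A] {x : ℕ → E} {d : ℕ → ℕ}

theorem exists_eq_zsmul_of_le (hx : ∀ K, x K = d K • x (K + 1)) {K L : ℕ} (hKL : K ≤ L) :
    ∃ D : ℤ, x K = D • x L := by
  induction L, hKL using Nat.le_induction with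
  | base => exact ⟨1, (one_zsmul _).symm⟩
  | succ L _ ih =>
    obtain ⟨D, hD⟩ := ih
    exact ⟨D * d L, by rw [hD, hx L, mul_zsmul, natCast_zsmul]⟩

/-- The section is `j • π (x K) ↦ j • x K`, well defined because each `π (x K)` has infinite
order and the `x K` are compatible. -/
theorem exists_addMonoidHom_section_of_tower [IsAddTorsionFree A] (π : E →+ A)
    (hx : ∀ K, x K = d K • x (K + 1)) (hne : ∀ K, π (x K) ≠ 0)
    (hcover : ∀ a, ∃ K, ∃ j : ℤ, a = j • π (x K)) :
    ∃ s : A →+ E, ∀ a, π (s a) = a := by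
  have lift {K M : ℕ} (hKM : K ≤ M) (j : ℤ) :
      ∃ j' : ℤ, j • π (x K) = j' • π (x M) ∧ j • x K = j' • x M := by
    obtain ⟨D, hD⟩ := exists_eq_zsmul_of_le hx hKM
    exact ⟨j * D, by rw [hD, map_zsmul, mul_zsmul], by rw [hD, mul_zsmul]⟩
  choose K j hj using hcover
  have well_defined {a : A} {L : ℕ} {i : ℤ} (ha : a = i • π (x L)) : j a • x (K a) = i • x L := by
    obtain ⟨i₁, hπ₁, hx₁⟩ := lift (le_max_left L (K a)) i
    obtain ⟨i₂, hπ₂, hx₂⟩ := lift (le_max_right L (K a)) (j a)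
    have : i₂ = i₁ := smul_left_injective ℤ (hne (max L (K a)))
      (hπ₂.symm.trans ((hj a).symm.trans (ha.trans hπ₁)))
    rw [hx₁, hx₂, this]
  refine ⟨AddMonoidHom.mk' (fun a => j a • x (K a)) fun a b => ?_, fun a => ?_⟩
  · obtain ⟨i₁, hπ₁, -⟩ := lift (le_max_left (K a) (K b)) (j a)
    obtain ⟨i₂, hπ₂, -⟩ := lift (le_max_right (K a) (K b)) (j b)
    have ha : a = i₁ • π (x (max (K a) (K b))) := (hj a).trans hπ₁
    have hb : b = i₂ • π (x (max (K a) (K b))) := (hj b).trans hπ₂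
    have hab : a + b = (i₁ + i₂) • π (x (max (K a) (K b))) := by rw [add_zsmul, ← ha, ← hb]
    change j (a + b) • x (K (a + b)) = j a • x (K a) + j b • x (K b)
    rw [well_defined hab, well_defined ha, well_defined hb, add_zsmul]
  · simp only [AddMonoidHom.mk'_apply, map_zsmul, ← hj]

end Tower

namespace Submonoid

variable (S : Submonoid ℕ)

open Classical in
noncomputable def succOrOne (k : ℕ) : ℕ := if k + 1 ∈ S then k + 1 else 1

/-- The product of the elements of `S` in `[1, K]`. -/
noncomputable def prodUpTo (K : ℕ) : ℕ := ∏ k ∈ Finset.range K, S.succOrOne k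

lemma succOrOne_mem (k : ℕ) : S.succOrOne k ∈ S := by
  unfold succOrOne
  split_ifs with h
  exacts [h, S.one_mem]

lemma succOrOne_pos (k : ℕ) : 0 < S.succOrOne k := by
  unfold succOrOne
  split_ifs <;> omega

lemma prodUpTo_succ (K : ℕ) : S.prodUpTo (K + 1) = S.prodUpTo K * S.succOrOne K :=
  Finset.prod_range_succ _ _

lemma prodUpTo_mem (K : ℕ) : S.prodUpTo K ∈ S :=
  _root_.prod_mem fun k _ => S.succOrOne_mem k

lemma prodUpTo_pos (K : ℕ) : 0 < S.prodUpTo K :=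
  Finset.prod_pos fun k _ => S.succOrOne_pos k

lemma dvd_prodUpTo {m : ℕ} (hm : m ∈ S) (hm0 : 0 < m) : m ∣ S.prodUpTo m := by
  obtain ⟨k, rfl⟩ : ∃ k, m = k + 1 := ⟨m - 1, by omega⟩
  calc k + 1 = S.succOrOne k := (if_pos hm).symm
    _ ∣ S.prodUpTo (k + 1) := Finset.dvd_prod_of_mem _ (Finset.mem_range.2 k.lt_succ_self)

theorem surjective_nsmul_of_mem_closure {P : Set ℕ} {B : Type*} [AddCommGroup B]
    (hdiv : ∀ p ∈ P, Function.Surjective fun b : B => p • b) {n : ℕ}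
    (hn : n ∈ closure P) : Function.Surjective fun b : B => n • b := by
  induction hn using closure_induction with
  | mem p hp => exact hdiv p hp
  | one => exact fun b => ⟨b, one_nsmul b⟩
  | mul m n _ _ hm hn =>
    intro b
    obtain ⟨c, rfl⟩ := hm b
    obtain ⟨c', rfl⟩ := hn c
    exact ⟨c', mul_nsmul' c' m n⟩

end Submonoid

namespace PRing

variable {P : Set ℕ}

lemma inv_natCast_mem {n : ℕ} (hn : n ∈ Submonoid.closure P) : (n : ℚ)⁻¹ ∈ PRing P := by
  induction hn using Submonoid.closure_induction with
  | mem p hp => exact Subring.subset_closure ⟨p, hp, rfl⟩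
  | one => simp
  | mul m n _ _ hm hn =>
    push_cast
    rw [mul_inv]
    exact mul_mem hm hn

lemma exists_eq_div_of_mem {x : ℚ} (hx : x ∈ PRing P) :
    ∃ k : ℤ, ∃ m ∈ Submonoid.closure P, 0 < m ∧ x = k / m := by
  induction hx using Subring.closure_induction with
  | mem x hx =>
    obtain ⟨p, hp, rfl⟩ := hx
    rcases Nat.eq_zero_or_pos p with rfl | hp0
    · -- `(0 : ℚ)⁻¹ = 0`
      exact ⟨0, 1, one_mem _, one_pos, by simp⟩
    · exact ⟨1, p, Submonoid.subset_closure hp, hp0, by simp⟩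
  | zero => exact ⟨0, 1, one_mem _, one_pos, by simp⟩
  | one => exact ⟨1, 1, one_mem _, one_pos, by simp⟩
  | add x y _ _ hx hy =>
    obtain ⟨k, m, hm, hm0, rfl⟩ := hx
    obtain ⟨l, n, hn, hn0, rfl⟩ := hy
    refine ⟨k * n + l * m, m * n, mul_mem hm hn, Nat.mul_pos hm0 hn0, ?_⟩
    field_simp
    push_cast
    ring
  | neg x _ hx =>
    obtain ⟨k, m, hm, hm0, rfl⟩ := hx
    exact ⟨-k, m, hm, hm0, by push_cast; ring⟩
  | mul x y _ _ hx hy =>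
    obtain ⟨k, m, hm, hm0, rfl⟩ := hx
    obtain ⟨l, n, hn, hn0, rfl⟩ := hy
    exact ⟨k * l, m * n, mul_mem hm hn, Nat.mul_pos hm0 hn0, by push_cast; rw [div_mul_div_comm]⟩

variable (P)

noncomputable def generator (K : ℕ) : PRing P :=
  ⟨((Submonoid.closure P).prodUpTo K : ℚ)⁻¹, inv_natCast_mem (Submonoid.prodUpTo_mem _ K)⟩

lemma generator_ne_zero (K : ℕ) : generator P K ≠ 0 := by
  rw [Ne, ← Subtype.coe_inj]
  simpa [generator] using (Submonoid.prodUpTo_pos _ K).ne'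

lemma generator_eq_nsmul_succ (K : ℕ) :
    generator P K = (Submonoid.closure P).succOrOne K • generator P (K + 1) := by
  have := (Submonoid.closure P).succOrOne_pos K
  ext
  simp only [generator, Submonoid.prodUpTo_succ, Nat.cast_mul, mul_inv_rev, nsmul_eq_mul,
    Subring.coe_mul, SubringClass.coe_natCast]
  field_simp

lemma exists_eq_zsmul_generator (c : PRing P) : ∃ K, ∃ j : ℤ, c = j • generator P K := by
  obtain ⟨k, m, hm, hm0, hc⟩ := exists_eq_div_of_mem c.2
  obtain ⟨e, he⟩ := (Submonoid.closure P).dvd_prodUpTo hm hm0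
  have he0 : 0 < e := Nat.pos_of_mul_pos_left (he ▸ Submonoid.prodUpTo_pos _ m)
  refine ⟨m, k * e, Subtype.ext ?_⟩
  simp only [hc, generator, he, Nat.cast_mul, mul_inv_rev, zsmul_eq_mul, Int.cast_mul,
    Int.cast_natCast, Subring.coe_mul, SubringClass.coe_intCast, SubringClass.coe_natCast]
  field_simp

end PRing

theorem secondCohomology_PRing_trivial_general (P : Set ℕ)
    (B : Type*) [AddCommGroup B] (hdiv : ∀ p ∈ P, ∀ b : B, ∃ d : B, p • d = b)
    (Ω : ↥(PRing P) → ↥(PRing P) → B) (hΩ : IsAddCocycle Ω) :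
    IsAddCoboundary Ω := by
  have : Fact (IsAddCocycle Ω) := ⟨hΩ⟩
  obtain ⟨x, hx_snd, hx⟩ := CocycleExtension.exists_compatible_lifts (Ω := Ω)
    (PRing.generator_eq_nsmul_succ P)
    fun K => Submonoid.surjective_nsmul_of_mem_closure hdiv (Submonoid.succOrOne_mem _ K)
  obtain ⟨s, hs⟩ := exists_addMonoidHom_section_of_tower CocycleExtension.sndHom hx
    (by simpa [hx_snd] using PRing.generator_ne_zero P)
    (by simpa [hx_snd] using PRing.exists_eq_zsmul_generator P)
  exact CocycleExtension.isAddCoboundary_of_section s hs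

/-- For `C = ℤ[𝒫⁻¹]` and an abelian group `B` which is `p`-divisible for every `p ∈ 𝒫`,
every normalized 2-cocycle `Ω : C × C → B` is a coboundary, i.e. `H²(C,B) = 0`. -/
theorem secondCohomology_PRing_trivial (P : Set ℕ) (hP : ∀ p ∈ P, p.Prime)
    (B : Type*) [AddCommGroup B] (hdiv : ∀ p ∈ P, ∀ b : B, ∃ d : B, p • d = b)
    (Ω : ↥(PRing P) → ↥(PRing P) → B) (hΩ : IsAddCocycle Ω) :
    IsAddCoboundary Ω :=
  secondCohomology_PRing_trivial_general P B hdiv Ω hΩ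
end

section
/- Let Λ be a countable group with only finitely many subgroups of index 2. Let Σ = (ℤ/2ℤ)^(Λ) be the direct sum of copies of ℤ/2ℤ indexed by Λ (finitely supported functions Λ → ℤ/2ℤ), equipped with the left-right action of Λ × Λ given by (α_{(g,h)}(a))_k = a_{g⁻¹kh}. Let Σ₀ ≤ Σ be the kernel of the homomorphism φ : Σ → ℤ/2ℤ, φ(a) = Σ_{k ∈ Λ} a_k. Then the set of group homomorphisms ω : Σ₀ → ℤ/2ℤ satisfying ω(α_{(g,h)}(a)) = ω(a) for all (g,h) ∈ Λ × Λ and all a ∈ Σ₀ is finite. -/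
/-- The subgroup `Σ₀` of `Σ = (ℤ/2ℤ)^(Λ)`: the kernel of the homomorphism summing all
coordinates. -/
noncomputable def sigmaZero (Λ : Type*) : AddSubgroup (Λ →₀ ZMod 2) :=
  (Finsupp.liftAddHom (fun _ : Λ => AddMonoidHom.id (ZMod 2))).ker

section Aux

variable {Λ : Type*} [Group Λ]

noncomputable def phiSum (Λ : Type*) : (Λ →₀ ZMod 2) →+ ZMod 2 :=
  Finsupp.liftAddHom (fun _ : Λ => AddMonoidHom.id (ZMod 2))

lemma mem_sigmaZero_iff {a : Λ →₀ ZMod 2} : a ∈ sigmaZero Λ ↔ phiSum Λ a = 0 := Iff.rfl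

lemma phiSum_single (x : Λ) (v : ZMod 2) : phiSum Λ (Finsupp.single x v) = v := by
  simp [phiSum]

lemma two01 (v : ZMod 2) : v = 0 ∨ v = 1 := by revert v; decide

lemma pair_mem (x y : Λ) :
    Finsupp.single x (1 : ZMod 2) + Finsupp.single y 1 ∈ sigmaZero Λ := by
  have h : (1 : ZMod 2) + 1 = 0 := by decide
  simp [mem_sigmaZero_iff, map_add, phiSum_single, h]

lemma single_self_add (y : Λ) :
    Finsupp.single y (1 : ZMod 2) + Finsupp.single y 1 = 0 := by
  rw [← Finsupp.single_add]
  have h : (1 : ZMod 2) + 1 = 0 := by decide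
  rw [h, Finsupp.single_zero]

/-- Projection `Σ → Σ₀`, `a ↦ a + (φ a)·δ₁`. -/
noncomputable def projS : (Λ →₀ ZMod 2) →+ ↥(sigmaZero Λ) :=
  AddMonoidHom.mk' (fun a => ⟨a + Finsupp.single 1 (phiSum Λ a), by
      have h : ∀ v : ZMod 2, v + v = 0 := by decide
      simp [mem_sigmaZero_iff, map_add, phiSum_single, h]⟩)
    (by
      intro a b
      apply Subtype.ext
      simp only [AddSubgroup.coe_add, map_add, Finsupp.single_add]
      abel)

lemma projS_of_mem {a : Λ →₀ ZMod 2} (ha : a ∈ sigmaZero Λ) : projS a = ⟨a, ha⟩ := by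
  apply Subtype.ext
  simp [projS, mem_sigmaZero_iff.1 ha]

/-- `c_ω(x) = ω(δ_x + δ_1)`. -/
noncomputable def cOf (ω : ↥(sigmaZero Λ) →+ ZMod 2) (x : Λ) : ZMod 2 :=
  ω ⟨Finsupp.single x 1 + Finsupp.single 1 1, pair_mem x 1⟩

lemma comp_projS_single (ω : ↥(sigmaZero Λ) →+ ZMod 2) (x : Λ) :
    ω.comp projS (Finsupp.single x 1) = cOf ω x := by
  have : projS (Finsupp.single x (1 : ZMod 2))
      = ⟨Finsupp.single x 1 + Finsupp.single 1 1, pair_mem x 1⟩ := by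
    apply Subtype.ext
    simp [projS, phiSum_single]
  simp [AddMonoidHom.comp_apply, this, cOf]

lemma cOf_injective : Function.Injective (cOf (Λ := Λ)) := by
  intro ω ω' hc
  have hcomp : ω.comp projS = ω'.comp projS := by
    apply Finsupp.addHom_ext
    intro x v
    rcases two01 v with rfl | rfl
    · simp
    · rw [comp_projS_single, comp_projS_single, hc]
  ext a
  obtain ⟨a, ha⟩ := a
  have h1 : ω ⟨a, ha⟩ = ω.comp projS a := by rw [AddMonoidHom.comp_apply, projS_of_mem ha]
  have h2 : ω' ⟨a, ha⟩ = ω'.comp projS a := by rw [AddMonoidHom.comp_apply, projS_of_mem ha]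
  rw [h1, h2, hcomp]

/-- For invariant `ω`, `c_ω` is additive-multiplicative. -/
lemma cOf_mul (ω : ↥(sigmaZero Λ) →+ ZMod 2)
    (hω : ∀ (g h : Λ) (a b : ↥(sigmaZero Λ)),
        (∀ k : Λ, (b : Λ →₀ ZMod 2) k = (a : Λ →₀ ZMod 2) (g⁻¹ * k * h)) →
        ω b = ω a)
    (x y : Λ) : cOf ω (x * y) = cOf ω x + cOf ω y := by
  have hB : Finsupp.single (x * y) (1 : ZMod 2) + Finsupp.single y 1 ∈ sigmaZero Λ :=
    pair_mem _ _
  have h1 : ω ⟨_, hB⟩ = cOf ω x := by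
    apply hω 1 y⁻¹
    intro k
    classical
    show (Finsupp.single (x * y) (1 : ZMod 2) + Finsupp.single y 1 : Λ →₀ ZMod 2) k
      = (Finsupp.single x (1 : ZMod 2) + Finsupp.single 1 1 : Λ →₀ ZMod 2) (1⁻¹ * k * y⁻¹)
    simp only [inv_one, one_mul, Finsupp.add_apply, Finsupp.single_apply,
      eq_mul_inv_iff_mul_eq]
  have h2 : (⟨Finsupp.single (x * y) 1 + Finsupp.single 1 1, pair_mem (x * y) 1⟩ :
      ↥(sigmaZero Λ))
      = ⟨_, hB⟩ + ⟨Finsupp.single y 1 + Finsupp.single 1 1, pair_mem y 1⟩ := by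
    apply Subtype.ext
    show Finsupp.single (x * y) (1 : ZMod 2) + Finsupp.single 1 1
      = (Finsupp.single (x * y) 1 + Finsupp.single y 1)
        + (Finsupp.single y 1 + Finsupp.single 1 1)
    rw [add_assoc, ← add_assoc (Finsupp.single y 1), single_self_add, zero_add]
  show ω _ = _
  rw [h2, map_add, h1]
  rfl

end Aux

/-- Let `Λ` be a countable group with only finitely many subgroups of index 2, let
`Σ = (ℤ/2ℤ)^(Λ)` with the left-right action `(α_{(g,h)}(a))_k = a_{g⁻¹kh}` of `Λ × Λ`, and
let `Σ₀` be the kernel of the coordinate-sum homomorphism `Σ → ℤ/2ℤ`. Then the set of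
homomorphisms `ω : Σ₀ → ℤ/2ℤ` that are invariant under the left-right action is finite. -/
theorem finitely_many_invariant_characters
    (Λ : Type*) [Group Λ] [Countable Λ]
    (hidx2 : {H : Subgroup Λ | H.index = 2}.Finite) :
    {ω : ↥(sigmaZero Λ) →+ ZMod 2 |
      ∀ (g h : Λ) (a b : ↥(sigmaZero Λ)),
        (∀ k : Λ, (b : Λ →₀ ZMod 2) k = (a : Λ →₀ ZMod 2) (g⁻¹ * k * h)) →
        ω b = ω a}.Finite := by
  set S := {ω : ↥(sigmaZero Λ) →+ ZMod 2 |
      ∀ (g h : Λ) (a b : ↥(sigmaZero Λ)),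
        (∀ k : Λ, (b : Λ →₀ ZMod 2) k = (a : Λ →₀ ZMod 2) (g⁻¹ * k * h)) →
        ω b = ω a} with hS
  set F : (↥(sigmaZero Λ) →+ ZMod 2) → Set Λ := fun ω => {x | cOf ω x = 0} with hF
  have hFinj : Function.Injective F := by
    intro ω ω' h
    apply cOf_injective
    funext x
    rcases two01 (cOf ω x) with h0 | h1
    · have : x ∈ F ω := h0
      rw [h] at this
      rw [h0]; exact this.symm
    · rcases two01 (cOf ω' x) with h0' | h1'
      · have : x ∈ F ω' := h0'
        rw [← h] at this
        exact absurd (show cOf ω x = 0 from this) (by rw [h1]; decide)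
      · rw [h1, h1']
  have himg : F '' S ⊆ (fun H : Subgroup Λ => (H : Set Λ)) ''
      (insert ⊤ {H : Subgroup Λ | H.index = 2}) := by
    rintro _ ⟨ω, hωS, rfl⟩
    by_cases hc : ∀ x, cOf ω x = 0
    · refine ⟨⊤, Set.mem_insert _ _, ?_⟩
      ext x
      simp [hF, hc x]
    · push_neg at hc
      obtain ⟨x₀, hx₀⟩ := hc
      have hx₀1 : cOf ω x₀ = 1 := (two01 _).resolve_left hx₀
      have hmul : ∀ a b : Λ,
          Multiplicative.ofAdd (cOf ω (a * b))
            = Multiplicative.ofAdd (cOf ω a) * Multiplicative.ofAdd (cOf ω b) := by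
        intro a b
        rw [cOf_mul ω hωS]
        rfl
      set f : Λ →* Multiplicative (ZMod 2) :=
        MonoidHom.mk' (fun x => Multiplicative.ofAdd (cOf ω x)) hmul with hf
      have hker : ∀ x : Λ, x ∈ f.ker ↔ cOf ω x = 0 := by
        intro x
        rw [MonoidHom.mem_ker]
        constructor
        · intro h; exact (Multiplicative.ofAdd.injective h :)
        · intro h; show Multiplicative.ofAdd (cOf ω x) = 1; rw [h]; rfl
      refine ⟨f.ker, Or.inr ?_, ?_⟩
      · show f.ker.index = 2
        rw [Subgroup.index_eq_two_iff]
        refine ⟨x₀, fun b => ?_⟩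
        have hmulb : cOf ω (b * x₀) = cOf ω b + 1 := by
          rw [cOf_mul ω hωS, hx₀1]
        rcases two01 (cOf ω b) with h0 | h1
        · exact Or.inr ⟨(hker b).2 h0, fun h => by
            have := (hker _).1 h
            rw [hmulb, h0] at this
            exact absurd this (by decide)⟩
        · exact Or.inl ⟨(hker _).2 (by rw [hmulb, h1]; decide), fun h => by
            have := (hker b).1 h
            rw [h1] at this
            exact absurd this (by decide)⟩
      · ext x
        simp [hF, hker x]
  have himgfin : (F '' S).Finite :=
    ((hidx2.insert ⊤).image _).subset himg
  exact Set.Finite.of_finite_image himgfin hFinj.injOn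
end
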